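/- arXiv:1612.08967 — 3 statements merged into one kernel-verified Lean document; each statement's English description precedes it below -/
import Mathlib

section
/- Let E be a real normed vector space, let n be a natural number, and for each i ∈ {1,…,n} let w_i be a real number and p_i : E → ℝ a function with p_i(θ) > 0 for all θ ∈ E that is differentiable at a point ν ∈ E. Define Ĵ(θ) = Σᵢ w_i · p_i(θ) and Ĵ_ν(θ) = Σᵢ w_i · p_i(ν) · (1 + log(p_i(θ)/p_i(ν))). Then Ĵ_ν is differentiable at ν and its Fréchet derivative at ν equals the Fréchet derivative of Ĵ at ν. -/
theorem J_lower_bound_gradient_match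
    {E : Type*} [NormedAddCommGroup E] [NormedSpace ℝ E]
    (n : ℕ) (w : Fin n → ℝ)
    (p : Fin n → E → ℝ) (hp : ∀ i θ, 0 < p i θ) (ν : E)
    (hdiff : ∀ i, DifferentiableAt ℝ (p i) ν) :
    DifferentiableAt ℝ (fun θ => ∑ i, w i * p i ν * (1 + Real.log (p i θ / p i ν))) ν ∧
    fderiv ℝ (fun θ => ∑ i, w i * p i ν * (1 + Real.log (p i θ / p i ν))) ν =
      fderiv ℝ (fun θ => ∑ i, w i * p i θ) ν := by
  have hJ : HasFDerivAt (fun θ => ∑ i, w i * p i θ)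
      (∑ i, w i • fderiv ℝ (p i) ν) ν := by
    apply HasFDerivAt.fun_sum
    intro i _
    exact ((hdiff i).hasFDerivAt).const_mul (w i)
  have hL : HasFDerivAt (fun θ => ∑ i, w i * p i ν * (1 + Real.log (p i θ / p i ν)))
      (∑ i, w i • fderiv ℝ (p i) ν) ν := by
    apply HasFDerivAt.fun_sum
    intro i _
    have hne : p i ν ≠ 0 := (hp i ν).ne'
    have h1 : HasFDerivAt (fun θ => p i θ / p i ν)
        ((p i ν)⁻¹ • fderiv ℝ (p i) ν) ν := by
      simpa [div_eq_mul_inv] using ((hdiff i).hasFDerivAt).mul_const (p i ν)⁻¹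
    have hlog : HasFDerivAt (fun θ => Real.log (p i θ / p i ν))
        ((p i ν)⁻¹ • fderiv ℝ (p i) ν) ν := by
      have := h1.log (div_ne_zero hne hne)
      simpa [div_self hne] using this
    have h2 := (hlog.const_add 1).const_mul (w i * p i ν)
    simpa [smul_smul, mul_assoc, mul_inv_cancel₀ hne] using h2
  exact ⟨hL.differentiableAt, by rw [hL.fderiv, hJ.fderiv]⟩
end

section
/- Let E be a real inner product space, let n be a natural number, and for each i ∈ {1,…,n} let w_i be a real number (of arbitrary sign) and p_i : E → ℝ a function with p_i(θ) > 0 for all θ ∈ E, such that log ∘ p_i is concave on E and differentiable at a fixed point ν ∈ E with gradient g_i ∈ E at ν. Define z_i(θ) = 1 + log(p_i(θ)/p_i(ν)) if w_i ≥ 0 and z_i(θ) = exp(⟨θ − ν, g_i⟩) if w_i < 0. Then for all θ ∈ E, Σᵢ w_i · p_i(θ) ≥ Σᵢ w_i · p_i(ν) · z_i(θ). -/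
lemma concave_le_tangent {E : Type*} [NormedAddCommGroup E] [NormedSpace ℝ E]
    {f : E → ℝ} {f' : E →L[ℝ] ℝ} {x : E}
    (hc : ConcaveOn ℝ (Set.univ : Set E) f) (hd : HasFDerivAt f f' x) (y : E) :
    f y ≤ f x + f' (y - x) := by
  set v := y - x with hv
  have hγ : HasDerivAt (fun t : ℝ => x + t • v) v 0 := by
    simpa using ((hasDerivAt_id (0 : ℝ)).smul_const v).const_add x
  have hφ : HasDerivAt (fun t : ℝ => f (x + t • v)) (f' v) 0 := by
    have hd' : HasFDerivAt f f' ((fun t : ℝ => x + t • v) 0) := by simpa using hd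
    exact hd'.comp_hasDerivAt 0 hγ
  have hslope := hasDerivAt_iff_tendsto_slope.mp hφ
  have hslope' : Filter.Tendsto (slope (fun t : ℝ => f (x + t • v)) 0)
      (nhdsWithin 0 (Set.Ioi 0)) (nhds (f' v)) :=
    hslope.mono_left (nhdsWithin_mono 0 fun t ht => ne_of_gt ht)
  have key : f y - f x ≤ f' v := by
    refine ge_of_tendsto hslope' ?_
    filter_upwards [Ioo_mem_nhdsGT_of_mem (by norm_num : (0:ℝ) ∈ Set.Ico 0 1)] with t ht
    have ht0 : 0 < t := ht.1
    have ht1 : t ≤ 1 := le_of_lt ht.2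
    have hcc := hc.2 (Set.mem_univ y) (Set.mem_univ x) (le_of_lt ht0)
      (by linarith : (0:ℝ) ≤ 1 - t) (by ring)
    have heq : t • y + (1 - t) • x = x + t • v := by
      rw [hv]; module
    rw [heq] at hcc
    have : t * (f y - f x) ≤ f (x + t • v) - f x := by
      simp only [smul_eq_mul] at hcc; nlinarith
    show f y - f x ≤ slope (fun t : ℝ => f (x + t • v)) 0 t
    simp only [slope, vsub_eq_sub, sub_zero, smul_eq_mul, zero_smul, add_zero]
    rw [le_inv_mul_iff₀ ht0]
    nlinarith
  linarith

theorem combined_bound_inequality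
    {E : Type*} [NormedAddCommGroup E] [InnerProductSpace ℝ E]
    (n : ℕ) (w : Fin n → ℝ)
    (p : Fin n → E → ℝ) (hp : ∀ i θ, 0 < p i θ)
    (hconc : ∀ i, ConcaveOn ℝ (Set.univ : Set E) (fun θ => Real.log (p i θ)))
    (ν : E) (g : Fin n → E)
    (hgrad : ∀ i, HasFDerivAt (fun θ => Real.log (p i θ)) (innerSL ℝ (g i)) ν) :
    ∀ θ : E,
      ∑ i, w i * p i ν *
          (if 0 ≤ w i then 1 + Real.log (p i θ / p i ν)
           else Real.exp (inner ℝ (θ - ν) (g i) : ℝ)) ≤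
        ∑ i, w i * p i θ := by
  intro θ
  apply Finset.sum_le_sum
  intro i _
  by_cases hw : 0 ≤ w i
  · rw [if_pos hw]
    have hr : 0 < p i θ / p i ν := div_pos (hp i θ) (hp i ν)
    have hlog : Real.log (p i θ / p i ν) ≤ p i θ / p i ν - 1 :=
      Real.log_le_sub_one_of_pos hr
    have : p i ν * (1 + Real.log (p i θ / p i ν)) ≤ p i θ := by
      have h2 : p i ν * (1 + Real.log (p i θ / p i ν)) ≤ p i ν * (p i θ / p i ν) := by
        apply mul_le_mul_of_nonneg_left (by linarith) (le_of_lt (hp i ν))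
      rwa [mul_div_cancel₀ _ (ne_of_gt (hp i ν))] at h2
    calc w i * p i ν * (1 + Real.log (p i θ / p i ν))
        = w i * (p i ν * (1 + Real.log (p i θ / p i ν))) := by ring
      _ ≤ w i * p i θ := mul_le_mul_of_nonneg_left this hw
  · rw [if_neg hw]
    have htan := concave_le_tangent (hconc i) (hgrad i) θ
    have hinner : (innerSL ℝ (g i)) (θ - ν) = (inner ℝ (θ - ν) (g i) : ℝ) := by
      simp [real_inner_comm]
    rw [hinner] at htan
    have hkey : p i θ ≤ p i ν * Real.exp (inner ℝ (θ - ν) (g i) : ℝ) := by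
      have := Real.exp_le_exp.mpr htan
      rwa [Real.exp_log (hp i θ), Real.exp_add, Real.exp_log (hp i ν)] at this
    calc w i * p i ν * Real.exp (inner ℝ (θ - ν) (g i) : ℝ)
        = w i * (p i ν * Real.exp (inner ℝ (θ - ν) (g i) : ℝ)) := by ring
      _ ≤ w i * p i θ := mul_le_mul_of_nonpos_left hkey (le_of_lt (lt_of_not_ge hw))
end

section
/- Let (T, μ) be a measure space, let β be a real number, and let pν, pθ, R : T → ℝ be measurable functions with pν(τ) > 0 and pθ(τ) > 0 for all τ, ∫ pν dμ = 1, and such that the functions τ ↦ pν(τ)·(1 + log(pθ(τ)/pν(τ)))·R(τ) and τ ↦ pν(τ)·log(pθ(τ)/pν(τ)) are integrable. Define J^β(θ) = ∫ pν(τ)·(1 + log(pθ(τ)/pν(τ)))·(R(τ) + β) dμ(τ) − β and J^0(θ) = ∫ pν(τ)·(1 + log(pθ(τ)/pν(τ)))·R(τ) dμ(τ). Then J^β(θ) − J^0(θ) = −β · ∫ pν(τ)·log(pν(τ)/pθ(τ)) dμ(τ), i.e., the difference equals minus β times the Kullback–Leibler divergence of pν from pθ. -/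
/-! Since `p * (1 + log (q / p)) = p + p * log (q / p)`, shifting the reward by `β` adds
`β * ∫ p + β * ∫ p * log (q / p)` to the bound; the first term is cancelled by the `- β`
because `∫ p = 1`, and the second is `-β` times the Kullback–Leibler divergence. -/

open MeasureTheory

theorem Real.log_div_comm (x y : ℝ) : Real.log (x / y) = -Real.log (y / x) := by
  rw [← Real.log_inv, inv_div]

section

variable {T : Type*} [MeasurableSpace T] {μ : Measure T}

theorem integrable_mul_one_add {p f : T → ℝ} (hp : Integrable p μ)
    (hpf : Integrable (fun τ => p τ * f τ) μ) : Integrable (fun τ => p τ * (1 + f τ)) μ := by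
  simp_rw [mul_add, mul_one]
  exact hp.add hpf

theorem integral_mul_one_add {p f : T → ℝ} (hp : Integrable p μ)
    (hpf : Integrable (fun τ => p τ * f τ) μ) :
    ∫ τ, p τ * (1 + f τ) ∂μ = ∫ τ, p τ ∂μ + ∫ τ, p τ * f τ ∂μ := by
  simp_rw [mul_add, mul_one]
  exact integral_add hp hpf

theorem integral_mul_add_const {g f : T → ℝ} (hgf : Integrable (fun τ => g τ * f τ) μ)
    (hg : Integrable g μ) (β : ℝ) :
    ∫ τ, g τ * (f τ + β) ∂μ = ∫ τ, g τ * f τ ∂μ + β * ∫ τ, g τ ∂μ := by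
  simp_rw [mul_add]
  rw [integral_add hgf (hg.mul_const β), integral_mul_const, mul_comm]

theorem integral_mul_log_div_comm (p q : T → ℝ) :
    ∫ τ, p τ * Real.log (p τ / q τ) ∂μ = -∫ τ, p τ * Real.log (q τ / p τ) ∂μ := by
  simp_rw [Real.log_div_comm (p _), mul_neg, integral_neg]

end

theorem shifted_bound_KL_difference_general
    {T : Type*} [MeasurableSpace T] (μ : Measure T) (β : ℝ)
    (pν pθ R : T → ℝ)
    (hint1 : ∫ τ, pν τ ∂μ = 1)
    (hi1 : Integrable (fun τ => pν τ * (1 + Real.log (pθ τ / pν τ)) * R τ) μ)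
    (hi2 : Integrable (fun τ => pν τ * Real.log (pθ τ / pν τ)) μ) :
    (∫ τ, pν τ * (1 + Real.log (pθ τ / pν τ)) * (R τ + β) ∂μ - β) -
        ∫ τ, pν τ * (1 + Real.log (pθ τ / pν τ)) * R τ ∂μ =
      -β * ∫ τ, pν τ * Real.log (pν τ / pθ τ) ∂μ := by
  have hν : Integrable pν μ := .of_integral_ne_zero (by simp [hint1])
  rw [integral_mul_add_const hi1 (integrable_mul_one_add hν hi2), integral_mul_one_add hν hi2,
    hint1, integral_mul_log_div_comm]
  ring

theorem shifted_bound_KL_difference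
    {T : Type*} [MeasurableSpace T] (μ : Measure T) (β : ℝ)
    (pν pθ R : T → ℝ)
    (hmν : Measurable pν) (hmθ : Measurable pθ) (hmR : Measurable R)
    (hν : ∀ τ, 0 < pν τ) (hθ : ∀ τ, 0 < pθ τ)
    (hint1 : ∫ τ, pν τ ∂μ = 1)
    (hi1 : Integrable (fun τ => pν τ * (1 + Real.log (pθ τ / pν τ)) * R τ) μ)
    (hi2 : Integrable (fun τ => pν τ * Real.log (pθ τ / pν τ)) μ) :
    (∫ τ, pν τ * (1 + Real.log (pθ τ / pν τ)) * (R τ + β) ∂μ - β) -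
        ∫ τ, pν τ * (1 + Real.log (pθ τ / pν τ)) * R τ ∂μ =
      -β * ∫ τ, pν τ * Real.log (pν τ / pθ τ) ∂μ :=
  shifted_bound_KL_difference_general μ β pν pθ R hint1 hi1 hi2
end
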